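/- Let (Ω, 𝓕, ℙ) be a probability space, let (X_n)_{n≥1} be an i.i.d. sequence of non-degenerate random variables taking values in ℕ = {1,2,3,...}, and let ν₀ > 1. Let (ν̂_n)_{n≥1} be a sequence of real-valued random variables (estimators, each ν̂_n measurable with respect to X_1, …, X_n and taking values in (1,∞)) such that ν̂_n → ν₀ almost surely as n → ∞. Define 𝔎_n = (1/n) Σ_{i,j=1}^n h_{ν̂_n}(X_i, X_j). Then liminf_{n→∞} 𝔎_n / n ≥ Δ_{ν₀} := ∫_0^1 ( E[ g_{ν₀}(X_1, s) ] )^2 ds, ℙ-almost surely. -/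

import Mathlib

open MeasureTheory Real Filter Set Topology

noncomputable def zetaR (ν : ℝ) : ℝ := ∑' k : ℕ, ((k : ℝ) + 1) ^ (-ν)

noncomputable def dpPMF (ν : ℝ) (k : ℕ) : ℝ := (k : ℝ) ^ (-ν) / zetaR ν

noncomputable def g (ν : ℝ) (x : ℕ) (s : ℝ) : ℝ :=
  s ^ (x - 1) - 1 + ((x : ℝ) / ((x : ℝ) + 1)) ^ ν * (1 - s ^ x)

noncomputable def hker (ν : ℝ) (x y : ℕ) : ℝ :=
  ∫ s in (0:ℝ)..1, g ν x s * g ν y s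

def IsDPareto {Ω : Type*} [MeasurableSpace Ω] (P : Measure Ω) (X : Ω → ℕ) (ν : ℝ) : Prop :=
  ∀ k : ℕ, 1 ≤ k → P (X ⁻¹' {k}) = ENNReal.ofReal (dpPMF ν k)

lemma aux_exp_sub_exp {a b : ℝ} (ha : a ≤ 0) (hb : b ≤ 0) :
    |Real.exp a - Real.exp b| ≤ |a - b| := by
  wlog hab : b ≤ a generalizing a b
  · rw [abs_sub_comm, abs_sub_comm a b]; exact this hb ha (le_of_not_ge hab)
  have h1 : Real.exp a ≤ 1 := Real.exp_le_one_iff.mpr ha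
  have h2 : (b - a) + 1 ≤ Real.exp (b - a) := Real.add_one_le_exp _
  have h3 : Real.exp b = Real.exp a * Real.exp (b - a) := by
    rw [← Real.exp_add]; ring_nf
  have h4 : Real.exp (b - a) ≤ 1 := Real.exp_le_one_iff.mpr (by linarith)
  have h5 : 0 < Real.exp a := Real.exp_pos a
  have h6 : Real.exp b ≤ Real.exp a := Real.exp_le_exp.mpr hab
  rw [abs_of_nonneg (by linarith), abs_of_nonneg (by linarith)]
  nlinarith

lemma g_cont (ν : ℝ) (x : ℕ) : Continuous fun s : ℝ => g ν x s := by
  unfold g; fun_prop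

lemma g_abs_le {ν : ℝ} (hν : 0 ≤ ν) {x : ℕ} (hx : 1 ≤ x) {s : ℝ}
    (hs0 : 0 ≤ s) (hs1 : s ≤ 1) : |g ν x s| ≤ 1 := by
  have hx0 : (0:ℝ) ≤ (x:ℝ) := Nat.cast_nonneg x
  have ht0 : (0:ℝ) ≤ (x:ℝ) / ((x:ℝ) + 1) := div_nonneg hx0 (by linarith)
  have ht1 : (x:ℝ) / ((x:ℝ) + 1) ≤ 1 := by
    rw [div_le_one (by linarith)]; linarith
  have hc0 : 0 ≤ ((x:ℝ) / ((x:ℝ) + 1)) ^ ν := Real.rpow_nonneg ht0 ν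
  have hc1 : ((x:ℝ) / ((x:ℝ) + 1)) ^ ν ≤ 1 := Real.rpow_le_one ht0 ht1 hν
  have hp0 : 0 ≤ s ^ (x - 1) := pow_nonneg hs0 _
  have hp1 : s ^ (x - 1) ≤ 1 := pow_le_one₀ hs0 hs1
  have hq0 : 0 ≤ s ^ x := pow_nonneg hs0 _
  have hq1 : s ^ x ≤ 1 := pow_le_one₀ hs0 hs1
  rw [g, abs_le]
  constructor <;> nlinarith

lemma g_diff_le {ν ν' : ℝ} (hν : 0 ≤ ν) (hν' : 0 ≤ ν') {x : ℕ} (hx : 1 ≤ x)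
    {s : ℝ} (hs0 : 0 ≤ s) (hs1 : s ≤ 1) :
    |g ν x s - g ν' x s| ≤ |ν - ν'| * Real.log 2 := by
  have hx1 : (1:ℝ) ≤ (x:ℝ) := by exact_mod_cast hx
  set t : ℝ := (x:ℝ) / ((x:ℝ) + 1) with hts
  have ht0 : 0 < t := div_pos (by linarith) (by linarith)
  have ht1 : t ≤ 1 := by rw [hts, div_le_one (by linarith)]; linarith
  have hlt : Real.log t ≤ 0 := Real.log_nonpos (le_of_lt ht0) ht1
  have hlog : |Real.log t| ≤ Real.log 2 := by
    rw [abs_of_nonpos hlt, ← Real.log_inv]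
    have hti : t⁻¹ = ((x:ℝ) + 1) / (x:ℝ) := by rw [hts, inv_div]
    have h2 : t⁻¹ ≤ 2 := by
      rw [hti, div_le_iff₀ (by linarith)]; linarith
    exact Real.log_le_log (by positivity) h2
  have hq0 : 0 ≤ s ^ x := pow_nonneg hs0 _
  have hq1 : s ^ x ≤ 1 := pow_le_one₀ hs0 hs1
  have hdiff : g ν x s - g ν' x s = (t ^ ν - t ^ ν') * (1 - s ^ x) := by
    simp only [g, hts]; ring
  rw [hdiff, abs_mul]
  have h1 : |1 - s ^ x| ≤ 1 := by rw [abs_of_nonneg (by linarith)]; linarith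
  have h2 : |t ^ ν - t ^ ν'| ≤ |ν - ν'| * Real.log 2 := by
    rw [Real.rpow_def_of_pos ht0, Real.rpow_def_of_pos ht0]
    have ha : Real.log t * ν ≤ 0 := mul_nonpos_iff.mpr (Or.inr ⟨hlt, hν⟩)
    have hb : Real.log t * ν' ≤ 0 := mul_nonpos_iff.mpr (Or.inr ⟨hlt, hν'⟩)
    calc |Real.exp (Real.log t * ν) - Real.exp (Real.log t * ν')|
        ≤ |Real.log t * ν - Real.log t * ν'| := aux_exp_sub_exp ha hb
      _ = |Real.log t| * |ν - ν'| := by rw [← mul_sub, abs_mul]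
      _ ≤ Real.log 2 * |ν - ν'| := by
          apply mul_le_mul_of_nonneg_right hlog (abs_nonneg _)
      _ = |ν - ν'| * Real.log 2 := mul_comm _ _
  calc |t ^ ν - t ^ ν'| * |1 - s ^ x| ≤ (|ν - ν'| * Real.log 2) * 1 := by
        apply mul_le_mul h2 h1 (abs_nonneg _)
        positivity
    _ = |ν - ν'| * Real.log 2 := mul_one _

theorem test_consistency
    {Ω : Type*} [MeasurableSpace Ω] (P : Measure Ω) [IsProbabilityMeasure P]
    (X : ℕ → Ω → ℕ) (hXm : ∀ n, Measurable (X n))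
    (hindep : ProbabilityTheory.iIndepFun X P)
    (hident : ∀ n : ℕ, Measure.map (X n) P = Measure.map (X 0) P)
    (hX1 : ∀ n ω, 1 ≤ X n ω)
    (hnondeg : ¬ ∃ c : ℕ, P (X 0 ⁻¹' {c}) = 1)
    (ν₀ : ℝ) (hν₀ : 1 < ν₀)
    (νhat : ℕ → Ω → ℝ) (hνhat_meas : ∀ n, Measurable (νhat n))
    (hνhat_adapted : ∀ n : ℕ, ∃ f : (Fin n → ℕ) → ℝ,
      νhat n = fun ω => f (fun i => X (i : ℕ) ω))
    (hνhat_gt : ∀ n ω, 1 < νhat n ω)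
    (hcons : ∀ᵐ ω ∂P, Filter.Tendsto (fun n => νhat n ω) Filter.atTop (nhds ν₀)) :
    ∀ᵐ ω ∂P,
      (∫ s in (0:ℝ)..1, (∫ ω', g ν₀ (X 0 ω') s ∂P) ^ 2) ≤
        Filter.liminf (fun n : ℕ =>
          ((1 / (n : ℝ)) * ∑ i ∈ Finset.range n, ∑ j ∈ Finset.range n,
            hker (νhat n ω) (X i ω) (X j ω)) / (n : ℝ)) Filter.atTop := by
  classical
  set μ : Measure ℝ := volume.restrict (Set.Ioc (0:ℝ) 1) with hμdef
  set m : ℝ → ℝ := fun s => ∫ ω', g ν₀ (X 0 ω') s ∂P with hmdef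
  have hν₀0 : (0:ℝ) ≤ ν₀ := by linarith
  -- joint measurability
  have hGmeas : ∀ i : ℕ, Measurable fun q : ℝ × Ω => g ν₀ (X i q.2) q.1 := by
    intro i
    have h1 : Measurable fun q : ℝ × ℕ => g ν₀ q.2 q.1 :=
      measurable_from_prod_countable_left fun k => (g_cont ν₀ k).measurable
    exact h1.comp (measurable_fst.prodMk ((hXm i).comp measurable_snd))
  have hmmeas : Measurable m := by
    have h1 : StronglyMeasurable fun q : ℝ × Ω => g ν₀ (X 0 q.2) q.1 :=
      (hGmeas 0).stronglyMeasurable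
    exact h1.integral_prod_right'.measurable
  -- SLLN at fixed s ∈ [0,1]
  have slln : ∀ s : ℝ, 0 ≤ s → s ≤ 1 → ∀ᵐ ω ∂P,
      Tendsto (fun n : ℕ => (n:ℝ)⁻¹ * ∑ i ∈ Finset.range n, g ν₀ (X i ω) s)
        atTop (𝓝 (m s)) := by
    intro s hs0 hs1
    have hmeas : ∀ i : ℕ, Measurable fun ω => g ν₀ (X i ω) s := by
      intro i
      exact (measurable_from_top : Measurable fun k : ℕ => g ν₀ k s).comp (hXm i)
    have hint : Integrable (fun ω => g ν₀ (X 0 ω) s) P := by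
      refine (integrable_const (1:ℝ)).mono' (hmeas 0).aestronglyMeasurable ?_
      exact Filter.Eventually.of_forall fun ω => by
        simpa [Real.norm_eq_abs] using g_abs_le hν₀0 (hX1 0 ω) hs0 hs1
    have hpind : Pairwise (Function.onFun (ProbabilityTheory.IndepFun · · P)
        fun i ω => g ν₀ (X i ω) s) := by
      intro i j hij
      exact (hindep.indepFun hij).comp
        (measurable_from_top : Measurable fun k : ℕ => g ν₀ k s)
        (measurable_from_top : Measurable fun k : ℕ => g ν₀ k s)
    have hid : ∀ i, ProbabilityTheory.IdentDistrib (fun ω => g ν₀ (X i ω) s)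
        (fun ω => g ν₀ (X 0 ω) s) P P := by
      intro i
      have hXi : ProbabilityTheory.IdentDistrib (X i) (X 0) P P :=
        ⟨(hXm i).aemeasurable, (hXm 0).aemeasurable, hident i⟩
      exact hXi.comp (measurable_from_top : Measurable fun k : ℕ => g ν₀ k s)
    have := ProbabilityTheory.strong_law_ae _ hint hpind hid
    filter_upwards [this] with ω hω
    simpa [smul_eq_mul] using hω
  -- swap the a.e. quantifiers
  have hswap : ∀ᵐ ω ∂P, ∀ᵐ s ∂μ,
      Tendsto (fun n : ℕ => (n:ℝ)⁻¹ * ∑ i ∈ Finset.range n, g ν₀ (X i ω) s)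
        atTop (𝓝 (m s)) := by
    have hms : MeasurableSet {q : ℝ × Ω |
        Tendsto (fun n : ℕ => (n:ℝ)⁻¹ * ∑ i ∈ Finset.range n, g ν₀ (X i q.2) q.1)
          atTop (𝓝 (m q.1))} := by
      apply measurableSet_tendsto_fun
      · intro n
        exact measurable_const.mul
          (Finset.measurable_sum _ fun i _ => hGmeas i)
      · exact hmmeas.comp measurable_fst
    refine (MeasureTheory.Measure.ae_ae_comm (μ := μ) (ν := P) hms).mp ?_
    filter_upwards [ae_restrict_mem measurableSet_Ioc] with s hs
    exact slln s (le_of_lt hs.1) hs.2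
  -- the algebraic identity for the statistic
  have hkey : ∀ (ν : ℝ) (ω : Ω) (n : ℕ),
      ((1 / (n : ℝ)) * ∑ i ∈ Finset.range n, ∑ j ∈ Finset.range n,
          hker ν (X i ω) (X j ω)) / (n : ℝ)
        = ∫ s in (0:ℝ)..1,
            ((n:ℝ)⁻¹ * ∑ i ∈ Finset.range n, g ν (X i ω) s) ^ 2 := by
    intro ν ω n
    have hcont : ∀ i j : ℕ,
        Continuous fun s : ℝ => g ν (X i ω) s * g ν (X j ω) s :=
      fun i j => (g_cont ν _).mul (g_cont ν _)
    have h2 : (∫ s in (0:ℝ)..1, (∑ i ∈ Finset.range n, g ν (X i ω) s) ^ 2)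
        = ∑ i ∈ Finset.range n, ∑ j ∈ Finset.range n, hker ν (X i ω) (X j ω) := by
      have hsq : ∀ s : ℝ, (∑ i ∈ Finset.range n, g ν (X i ω) s) ^ 2
          = ∑ i ∈ Finset.range n, ∑ j ∈ Finset.range n,
              g ν (X i ω) s * g ν (X j ω) s := by
        intro s; rw [sq, Finset.sum_mul_sum]
      rw [intervalIntegral.integral_congr (g := fun s => ∑ i ∈ Finset.range n,
            ∑ j ∈ Finset.range n, g ν (X i ω) s * g ν (X j ω) s)
          fun s _ => hsq s]
      rw [intervalIntegral.integral_finset_sum (fun i _ =>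
        (continuous_finset_sum _ fun j _ => hcont i j).intervalIntegrable 0 1)]
      exact Finset.sum_congr rfl fun i _ =>
        intervalIntegral.integral_finset_sum fun j _ =>
          (hcont i j).intervalIntegrable 0 1
    have h3 : (∫ s in (0:ℝ)..1,
          ((n:ℝ)⁻¹ * ∑ i ∈ Finset.range n, g ν (X i ω) s) ^ 2)
        = ((n:ℝ)⁻¹) ^ 2 * ∫ s in (0:ℝ)..1,
            (∑ i ∈ Finset.range n, g ν (X i ω) s) ^ 2 := by
      rw [← intervalIntegral.integral_const_mul]
      apply intervalIntegral.integral_congr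
      intro s _; ring
    rw [h3, h2, one_div, div_eq_mul_inv]
    ring
  -- conclude
  filter_upwards [hcons, hswap] with ω hνc hA
  have hinvle : ∀ n : ℕ, (n:ℝ)⁻¹ * (n:ℝ) ≤ 1 := by
    intro n
    rcases Nat.eq_zero_or_pos n with h | h
    · simp [h]
    · rw [inv_mul_cancel₀ (by positivity : ((n:ℝ)) ≠ 0)]
  have havg_bound : ∀ (c : ℝ), 0 ≤ c → ∀ (f : ℕ → ℝ) (n : ℕ),
      (∀ i ∈ Finset.range n, |f i| ≤ c) →
      |(n:ℝ)⁻¹ * ∑ i ∈ Finset.range n, f i| ≤ c := by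
    intro c hc f n hf
    have h1 : |∑ i ∈ Finset.range n, f i| ≤ (n:ℝ) * c := by
      calc |∑ i ∈ Finset.range n, f i| ≤ ∑ i ∈ Finset.range n, |f i| :=
            Finset.abs_sum_le_sum_abs _ _
        _ ≤ (Finset.range n).card • c := Finset.sum_le_card_nsmul _ _ _ hf
        _ = (n:ℝ) * c := by simp [nsmul_eq_mul]
    calc |(n:ℝ)⁻¹ * ∑ i ∈ Finset.range n, f i|
        = (n:ℝ)⁻¹ * |∑ i ∈ Finset.range n, f i| := by
          rw [abs_mul, abs_of_nonneg (by positivity : (0:ℝ) ≤ (n:ℝ)⁻¹)]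
      _ ≤ (n:ℝ)⁻¹ * ((n:ℝ) * c) := by
          apply mul_le_mul_of_nonneg_left h1 (by positivity)
      _ = ((n:ℝ)⁻¹ * (n:ℝ)) * c := by ring
      _ ≤ 1 * c := mul_le_mul_of_nonneg_right (hinvle n) hc
      _ = c := one_mul c
  have htend : Tendsto (fun n : ℕ => ∫ s in (0:ℝ)..1,
      ((n:ℝ)⁻¹ * ∑ i ∈ Finset.range n, g (νhat n ω) (X i ω) s) ^ 2)
      atTop (𝓝 (∫ s in (0:ℝ)..1, (m s) ^ 2)) := by
    apply intervalIntegral.tendsto_integral_filter_of_dominated_convergence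
      (fun _ => (1:ℝ))
    · exact Filter.Eventually.of_forall fun n =>
        ((continuous_const.mul (continuous_finset_sum _ fun i _ =>
          g_cont _ _)).pow 2).aestronglyMeasurable
    · refine Filter.Eventually.of_forall fun n => ae_of_all _ fun s hs => ?_
      have hs' : s ∈ Set.Ioc (0:ℝ) 1 := by
        rwa [Set.uIoc_of_le zero_le_one] at hs
      have hb : |(n:ℝ)⁻¹ * ∑ i ∈ Finset.range n, g (νhat n ω) (X i ω) s| ≤ 1 := by
        apply havg_bound 1 zero_le_one
        intro i _
        exact g_abs_le (by linarith [hνhat_gt n ω]) (hX1 i ω) (le_of_lt hs'.1) hs'.2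
      have : ‖((n:ℝ)⁻¹ * ∑ i ∈ Finset.range n, g (νhat n ω) (X i ω) s) ^ 2‖
          = |(n:ℝ)⁻¹ * ∑ i ∈ Finset.range n, g (νhat n ω) (X i ω) s| ^ 2 := by
        rw [Real.norm_eq_abs, abs_pow]
      rw [this]
      calc |(n:ℝ)⁻¹ * ∑ i ∈ Finset.range n, g (νhat n ω) (X i ω) s| ^ 2
          ≤ 1 ^ 2 := by
            apply pow_le_pow_left₀ (abs_nonneg _) hb
        _ = 1 := one_pow 2
    · exact intervalIntegrable_const
    · have hA' : ∀ᵐ s ∂(volume : Measure ℝ), s ∈ Set.Ioc (0:ℝ) 1 →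
          Tendsto (fun n : ℕ => (n:ℝ)⁻¹ * ∑ i ∈ Finset.range n, g ν₀ (X i ω) s)
            atTop (𝓝 (m s)) := (ae_restrict_iff' measurableSet_Ioc).mp hA
      filter_upwards [hA'] with s hs hsI
      have hs' : s ∈ Set.Ioc (0:ℝ) 1 := by
        rwa [Set.uIoc_of_le zero_le_one] at hsI
      have h1 := hs hs'
      have hd0 : Tendsto (fun n : ℕ => |νhat n ω - ν₀| * Real.log 2) atTop (𝓝 0) := by
        have h2 : Tendsto (fun n : ℕ => νhat n ω - ν₀) atTop (𝓝 0) := by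
          simpa using hνc.sub (tendsto_const_nhds : Tendsto (fun _ : ℕ => ν₀) atTop (𝓝 ν₀))
        have h3 := h2.abs
        simp only [abs_zero] at h3
        simpa using h3.mul_const (Real.log 2)
      have hdiff : ∀ n : ℕ,
          ‖((n:ℝ)⁻¹ * ∑ i ∈ Finset.range n, g (νhat n ω) (X i ω) s)
            - ((n:ℝ)⁻¹ * ∑ i ∈ Finset.range n, g ν₀ (X i ω) s)‖
          ≤ |νhat n ω - ν₀| * Real.log 2 := by
        intro n
        have heq : ((n:ℝ)⁻¹ * ∑ i ∈ Finset.range n, g (νhat n ω) (X i ω) s)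
            - ((n:ℝ)⁻¹ * ∑ i ∈ Finset.range n, g ν₀ (X i ω) s)
            = (n:ℝ)⁻¹ * ∑ i ∈ Finset.range n,
                (g (νhat n ω) (X i ω) s - g ν₀ (X i ω) s) := by
          rw [Finset.sum_sub_distrib]; ring
        rw [Real.norm_eq_abs, heq]
        apply havg_bound _ (by positivity) _ n
        intro i _
        exact g_diff_le (by linarith [hνhat_gt n ω]) hν₀0 (hX1 i ω)
          (le_of_lt hs'.1) hs'.2
      have hSA : Tendsto (fun n : ℕ =>
          ((n:ℝ)⁻¹ * ∑ i ∈ Finset.range n, g (νhat n ω) (X i ω) s)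
            - ((n:ℝ)⁻¹ * ∑ i ∈ Finset.range n, g ν₀ (X i ω) s)) atTop (𝓝 0) :=
        squeeze_zero_norm hdiff hd0
      have hS : Tendsto (fun n : ℕ =>
          (n:ℝ)⁻¹ * ∑ i ∈ Finset.range n, g (νhat n ω) (X i ω) s)
          atTop (𝓝 (m s)) := by
        have := h1.add hSA
        rw [add_zero] at this
        exact this.congr fun n => by ring
      exact hS.pow 2
  have hfun : (fun n : ℕ =>
      ((1 / (n : ℝ)) * ∑ i ∈ Finset.range n, ∑ j ∈ Finset.range n,
        hker (νhat n ω) (X i ω) (X j ω)) / (n : ℝ))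
      = fun n : ℕ => ∫ s in (0:ℝ)..1,
          ((n:ℝ)⁻¹ * ∑ i ∈ Finset.range n, g (νhat n ω) (X i ω) s) ^ 2 :=
    funext fun n => hkey (νhat n ω) ω n
  rw [hfun, htend.liminf_eq]
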